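/- arXiv:1205.1751 — 2 statements merged into one kernel-verified Lean document; each statement's English description precedes it below -/
import Mathlib

section
/- Let ϑ_1, …, ϑ_k ∈ {±1} with an odd number of indices i satisfying ϑ_i = −1, and define ℓ_i := ϑ_i e_i − e_{i+1} ∈ ℤ^k (cyclically, e_{k+1} = e_1). Then the ℤ-span of {ℓ_1, …, ℓ_k} equals the sublattice {a = ∑_i α_i e_i ∈ ℤ^k : ∑_i α_i ≡ 0 (mod 2)} of vectors with even coordinate sum. -/
/-!
Modulo the lattice `L` spanned by the `ℓ i`, the relations read `e (i + 1) ≡ ϑ i • e i`, so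
going once around the cycle gives `e 1 ≡ (∏ ϑ i) • e 1 = -e 1`, because an odd number of signs
is `-1`. Hence `2 • e 1 ∈ L` and, since `-e 1 ≡ e 1`, every `e i ≡ e 1`. A vector `a` is then
congruent to `(∑ a x) • e 1`, which lies in `L` once the coordinate sum is even. Conversely each
`ℓ i` has coordinate sum `ϑ i - 1 ∈ {0, -2}`.
-/

open Finset

theorem Finset.prod_eq_neg_one_pow_card_filter {ι R : Type*} [CommMonoid R] [HasDistribNeg R]
    [DecidableEq R] {s : Finset ι} {ϑ : ι → R} (hϑ : ∀ i ∈ s, ϑ i = 1 ∨ ϑ i = -1) :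
    ∏ i ∈ s, ϑ i = (-1) ^ #(s.filter (ϑ · = -1)) := by
  rw [← prod_filter_mul_prod_filter_not s (ϑ · = -1),
    prod_congr rfl fun i hi => (mem_filter.1 hi).2, prod_const,
    prod_eq_one fun i hi => (hϑ i (mem_filter.1 hi).1).resolve_right (mem_filter.1 hi).2, mul_one]

theorem succ_eq_prod_smul_of_succ_eq_smul {R M : Type*} [CommMonoid R] [MulAction R M]
    {x : ℕ → M} {ϑ : ℕ → R} {n : ℕ} (hstep : ∀ i, 1 ≤ i → i ≤ n → x (i + 1) = ϑ i • x i) :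
    x (n + 1) = (∏ i ∈ Icc 1 n, ϑ i) • x 1 := by
  induction n with
  | zero => simp
  | succ n ih =>
    rw [hstep (n + 1) (by omega) le_rfl, ih fun i h1 h2 => hstep i h1 (by omega), smul_smul,
      prod_Icc_succ_top (by omega), mul_comm]

section SignedCycle

variable {R M : Type*} [CommRing R] [DecidableEq R] [AddCommGroup M] [Module R M]
  {x : ℕ → M} {ϑ : ℕ → R} {k : ℕ}

theorem add_self_eq_zero_of_signed_cycle (hϑ : ∀ i, 1 ≤ i → i ≤ k → ϑ i = 1 ∨ ϑ i = -1)
    (hodd : Odd #((Icc 1 k).filter (ϑ · = -1)))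
    (hstep : ∀ i, 1 ≤ i → i ≤ k → x (i + 1) = ϑ i • x i) (hcyc : x (k + 1) = x 1) :
    x 1 + x 1 = 0 := by
  have hprod : ∏ i ∈ Icc 1 k, ϑ i = -1 := by
    rw [prod_eq_neg_one_pow_card_filter fun i hi => hϑ i (mem_Icc.1 hi).1 (mem_Icc.1 hi).2,
      hodd.neg_one_pow]
  rw [← neg_eq_iff_add_eq_zero, ← neg_one_smul R, ← hprod,
    ← succ_eq_prod_smul_of_succ_eq_smul hstep, hcyc]

theorem eq_first_of_signed_cycle (hϑ : ∀ i, 1 ≤ i → i ≤ k → ϑ i = 1 ∨ ϑ i = -1)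
    (hstep : ∀ i, 1 ≤ i → i ≤ k → x (i + 1) = ϑ i • x i) (hneg : -x 1 = x 1) :
    ∀ n ≤ k, x (n + 1) = x 1 := by
  intro n hn
  have hϑn : ∀ i ∈ Icc 1 n, ϑ i = 1 ∨ ϑ i = -1 := fun i hi =>
    hϑ i (mem_Icc.1 hi).1 ((mem_Icc.1 hi).2.trans hn)
  rw [succ_eq_prod_smul_of_succ_eq_smul fun i h1 h2 => hstep i h1 (h2.trans hn),
    prod_eq_neg_one_pow_card_filter hϑn]
  rcases neg_one_pow_eq_or R #((Icc 1 n).filter (ϑ · = -1)) with h | h <;>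
    simp [h, hneg]

end SignedCycle

section EvenSum

variable {ι : Type*} [Fintype ι]

theorem two_dvd_sum_of_mem_span {s : Set (ι → ℤ)} (hs : ∀ v ∈ s, 2 ∣ ∑ i, v i) {a : ι → ℤ}
    (ha : a ∈ Submodule.span ℤ s) : 2 ∣ ∑ i, a i := by
  induction ha using Submodule.span_induction with
  | mem v hv => exact hs v hv
  | zero => simp
  | add a b _ _ ha hb => simpa [sum_add_distrib] using dvd_add ha hb
  | smul c a _ ha => simpa [← mul_sum] using ha.mul_left c

theorem Submodule.mem_of_two_dvd_sum [DecidableEq ι] (L : Submodule ℤ (ι → ℤ)) (y : (ι → ℤ) ⧸ L)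
    (hy : ∀ i, L.mkQ (Pi.single i 1) = y) (h2 : y + y = 0) {a : ι → ℤ} (ha : 2 ∣ ∑ i, a i) :
    a ∈ L := by
  obtain ⟨m, hm⟩ := ha
  have hq : L.mkQ a = (∑ i, a i) • y := by
    conv_lhs => rw [pi_eq_sum_univ' a]
    simp only [map_sum, map_smul, hy, sum_smul]
  rw [← Submodule.Quotient.mk_eq_zero, ← L.mkQ_apply, hq, hm, mul_comm, mul_smul, two_smul, h2,
    smul_zero]

end EvenSum

theorem stmt14_general (k : ℕ)
    (ϑ : ℕ → ℤ) (hϑ : ∀ i, 1 ≤ i → i ≤ k → ϑ i = 1 ∨ ϑ i = -1)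
    (hodd : Odd ((Finset.Icc 1 k).filter (fun i => ϑ i = -1)).card)
    (e : ℕ → Fin k → ℤ)
    (he : ∀ i, 1 ≤ i → i ≤ k → e i = fun x : Fin k => if (x : ℕ) = i - 1 then 1 else 0)
    (hecyc : e (k + 1) = e 1)
    (ℓ : ℕ → Fin k → ℤ)
    (hℓ : ∀ i, 1 ≤ i → i ≤ k → ℓ i = ϑ i • e i - e (i + 1)) :
    (Submodule.span ℤ {v : Fin k → ℤ | ∃ i, 1 ≤ i ∧ i ≤ k ∧ v = ℓ i} :
        Set (Fin k → ℤ)) =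
      {a : Fin k → ℤ | (2 : ℤ) ∣ ∑ x : Fin k, a x} := by
  have hbasis : ∀ j (hj : j < k), e (j + 1) = Pi.single ⟨j, hj⟩ 1 := by
    intro j hj
    ext x
    simp [he (j + 1) (by omega) hj, Pi.single_apply, Fin.ext_iff]
  have hsum_e : ∀ j ≤ k, 0 < k → ∑ x, e (j + 1) x = 1 := by
    intro j hj hk
    rcases hj.lt_or_eq with hj | rfl
    · simp [hbasis j hj]
    · rw [hecyc, show e 1 = e (0 + 1) from rfl, hbasis 0 hk]
      simp
  set L := Submodule.span ℤ {v : Fin k → ℤ | ∃ i, 1 ≤ i ∧ i ≤ k ∧ v = ℓ i}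
  have hstep : ∀ i, 1 ≤ i → i ≤ k → L.mkQ (e (i + 1)) = ϑ i • L.mkQ (e i) := by
    intro i h1 h2
    have hℓL : L.mkQ (ℓ i) = 0 :=
      (Submodule.Quotient.mk_eq_zero L).2 (Submodule.subset_span ⟨i, h1, h2, rfl⟩)
    rw [hℓ i h1 h2, map_sub, map_smul, sub_eq_zero] at hℓL
    exact hℓL.symm
  have htwo := add_self_eq_zero_of_signed_cycle (x := fun i => L.mkQ (e i)) hϑ hodd hstep
    (congrArg L.mkQ hecyc)
  have hconst := eq_first_of_signed_cycle (x := fun i => L.mkQ (e i)) hϑ hstep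
    (neg_eq_of_add_eq_zero_left htwo)
  ext a
  refine ⟨two_dvd_sum_of_mem_span ?_, L.mem_of_two_dvd_sum _ ?_ htwo⟩
  · rintro _ ⟨i, h1, h2, rfl⟩
    obtain ⟨j, rfl⟩ : ∃ j, i = j + 1 := ⟨i - 1, by omega⟩
    simp only [hℓ (j + 1) h1 h2, Pi.sub_apply, Pi.smul_apply, smul_eq_mul, sum_sub_distrib,
      ← mul_sum, hsum_e j (by omega) (by omega), hsum_e (j + 1) h2 (by omega)]
    rcases hϑ (j + 1) h1 h2 with h | h <;> norm_num [h]
  · intro j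
    rw [← hbasis j j.isLt]
    exact hconst j j.isLt.le

theorem stmt14 (k : ℕ) (hk : 1 ≤ k)
    (ϑ : ℕ → ℤ) (hϑ : ∀ i, 1 ≤ i → i ≤ k → ϑ i = 1 ∨ ϑ i = -1)
    (hodd : Odd ((Finset.Icc 1 k).filter (fun i => ϑ i = -1)).card)
    (e : ℕ → Fin k → ℤ)
    (he : ∀ i, 1 ≤ i → i ≤ k → e i = fun x : Fin k => if (x : ℕ) = i - 1 then 1 else 0)
    (hecyc : e (k + 1) = e 1)
    (ℓ : ℕ → Fin k → ℤ)
    (hℓ : ∀ i, 1 ≤ i → i ≤ k → ℓ i = ϑ i • e i - e (i + 1)) :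
    (Submodule.span ℤ {v : Fin k → ℤ | ∃ i, 1 ≤ i ∧ i ≤ k ∧ v = ℓ i} :
        Set (Fin k → ℤ)) =
      {a : Fin k → ℤ | (2 : ℤ) ∣ ∑ x : Fin k, a x} :=
  stmt14_general k ϑ hϑ hodd e he hecyc ℓ hℓ
end

section
/- Let m ≥ 1 and let x = (x_1,…,x_m), y = (y_1,…,y_m) ∈ ℚ^m with y ≠ 0. Suppose the identity ∑_{i=1}^m y_i T_i^2 + (∑_{i=1}^m x_i T_i)(∑_{i=1}^m y_i T_i) = 0 holds in ℚ[T_1, …, T_m]. Then exactly one of the following holds: (a) there exist an index i and β ∈ ℚ \ {0} with y = β e_i and x = −e_i; or (b) there exist distinct indices i ≠ j and β ∈ ℚ \ {0} with y = β(e_i − e_j) and x = −(e_i + e_j). In particular, if ∑_i x_i = −2 then case (b) holds. -/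
/-!
Evaluating the identity at `e_k` and at `e_i + e_j` (equivalently, comparing the coefficients of
`T_k ^ 2` and `T_i T_j`) gives `y_k (1 + x_k) = 0` and `x_i y_j + x_j y_i = 0`. Hence `x_k = -1` on
the support of `y` and `x_k = 0` off it, and then any two nonzero entries of `y` are opposite.
Three nonzero entries would force `2 y_i = 0`, so the support of `y` has one or two elements,
which are cases (a) and (b); they differ already in the number of nonzero entries of `y`.
-/

open MvPolynomial

/-- The coefficients of `T_k ^ 2` and of `T_i T_j` (`i ≠ j`) in `y^{(2)} + x · y`. -/
structure QuadraticRelations {R ι : Type*} [CommRing R] (x y : ι → R) : Prop where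
  diag (k : ι) : y k * (1 + x k) = 0
  offDiag {i j : ι} (hij : i ≠ j) : x i * y j + x j * y i = 0

namespace QuadraticRelations

variable {R ι : Type*} [CommRing R] {x y : ι → R}

theorem of_eq_zero [Fintype ι] [DecidableEq ι]
    (h : (∑ i, C (y i) * X i ^ 2) + (∑ i, C (x i) * X i) * (∑ i, C (y i) * X i) =
      (0 : MvPolynomial ι R)) :
    QuadraticRelations x y := by
  have heval (t : ι → R) :
      (∑ i, y i * t i ^ 2) + (∑ i, x i * t i) * (∑ i, y i * t i) = 0 := by
    simpa using congrArg (eval t) h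
  have hdiag (k : ι) : y k * (1 + x k) = 0 := by
    have hk : y k + x k * y k = 0 := by simpa [Pi.single_apply] using heval (Pi.single k 1)
    linear_combination hk
  refine ⟨hdiag, fun {i j} hij => ?_⟩
  have hpair : (y i + y j) + (x i + x j) * (y i + y j) = 0 := by
    have := heval (Pi.single i 1 + Pi.single j 1)
    simpa [Pi.single_apply, add_sq, Finset.sum_add_distrib, mul_add, hij.symm] using this
  linear_combination hpair - hdiag i - hdiag j

variable [NoZeroDivisors R]

theorem eq_neg_one_of_ne_zero (H : QuadraticRelations x y) {k : ι} (hk : y k ≠ 0) :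
    x k = -1 := by
  have := (mul_eq_zero.mp (H.diag k)).resolve_left hk
  linear_combination this

theorem eq_zero_of_eq_zero (H : QuadraticRelations x y) {k l : ι} (hk : y k ≠ 0)
    (hl : y l = 0) : x l = 0 := by
  have hkl : k ≠ l := fun h => hk (h ▸ hl)
  have := H.offDiag hkl
  rw [hl, mul_zero, zero_add] at this
  exact (mul_eq_zero.mp this).resolve_right hk

theorem eq_neg_of_ne_zero (H : QuadraticRelations x y) {i j : ι} (hij : i ≠ j) (hi : y i ≠ 0)
    (hj : y j ≠ 0) : y j = -y i := by
  have := H.offDiag hij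
  rw [H.eq_neg_one_of_ne_zero hi, H.eq_neg_one_of_ne_zero hj] at this
  linear_combination -this

theorem eq_zero_of_ne_of_ne [NeZero (2 : R)] (H : QuadraticRelations x y) {i j k : ι}
    (hij : i ≠ j) (hi : y i ≠ 0) (hj : y j ≠ 0) (hki : k ≠ i) (hkj : k ≠ j) :
    y k = 0 := by
  by_contra hk
  have h2 : (2 : R) * y i = 0 := by
    linear_combination H.eq_neg_of_ne_zero hki hk hi - H.eq_neg_of_ne_zero hkj hk hj +
      H.eq_neg_of_ne_zero hij hi hj
  exact hi ((mul_eq_zero.mp h2).resolve_left two_ne_zero)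

theorem eq_smul_single [DecidableEq ι] (H : QuadraticRelations x y) {i : ι} (hi : y i ≠ 0)
    (hsupp : ∀ k ≠ i, y k = 0) :
    y = y i • Pi.single i 1 ∧ x = -Pi.single i 1 := by
  constructor <;> ext l <;> rcases eq_or_ne l i with rfl | hli
  · simp
  · simp [hsupp l hli, hli]
  · simp [H.eq_neg_one_of_ne_zero hi]
  · simp [H.eq_zero_of_eq_zero hi (hsupp l hli), hli]

theorem eq_smul_single_sub_single [DecidableEq ι] [NeZero (2 : R)]
    (H : QuadraticRelations x y) {i j : ι} (hij : i ≠ j) (hi : y i ≠ 0) (hj : y j ≠ 0) :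
    y = y i • (Pi.single i 1 - Pi.single j 1) ∧ x = -(Pi.single i 1 + Pi.single j 1) := by
  have hy0 {l : ι} (hli : l ≠ i) (hlj : l ≠ j) : y l = 0 :=
    H.eq_zero_of_ne_of_ne hij hi hj hli hlj
  constructor <;> ext l <;> rcases eq_or_ne l i with rfl | hli
  · simp [hij]
  · rcases eq_or_ne l j with rfl | hlj
    · simp [hli, H.eq_neg_of_ne_zero hij hi hj]
    · simp [hli, hlj, hy0 hli hlj]
  · simp [hij, H.eq_neg_one_of_ne_zero hi]
  · rcases eq_or_ne l j with rfl | hlj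
    · simp [hli, H.eq_neg_one_of_ne_zero hj]
    · simp [hli, hlj, H.eq_zero_of_eq_zero hi (hy0 hli hlj)]

theorem single_or_pair [DecidableEq ι] [NeZero (2 : R)] (H : QuadraticRelations x y)
    (hy : y ≠ 0) :
    (∃ (i : ι) (β : R), β ≠ 0 ∧ y = β • (Pi.single i 1 : ι → R) ∧
        x = -(Pi.single i 1 : ι → R)) ∨
      (∃ (i j : ι) (β : R), i ≠ j ∧ β ≠ 0 ∧
        y = β • ((Pi.single i 1 : ι → R) - Pi.single j 1) ∧
        x = -((Pi.single i 1 : ι → R) + Pi.single j 1)) := by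
  obtain ⟨i, hi⟩ := Function.ne_iff.mp hy
  by_cases hpair : ∃ j ≠ i, y j ≠ 0
  · obtain ⟨j, hji, hj⟩ := hpair
    exact .inr ⟨i, j, y i, hji.symm, hi, H.eq_smul_single_sub_single hji.symm hi hj⟩
  · push Not at hpair
    exact .inl ⟨i, y i, hi, H.eq_smul_single hi hpair⟩

end QuadraticRelations

theorem smul_single_ne_smul_sub_single {R ι : Type*} [Ring R] [DecidableEq ι] {i j k : ι}
    (hij : i ≠ j) (β : R) {γ : R} (hγ : γ ≠ 0) :
    β • (Pi.single k 1 : ι → R) ≠ γ • (Pi.single i 1 - Pi.single j 1) := by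
  intro h
  rcases eq_or_ne k i with rfl | hki
  · have hj := congrFun h j
    simp [hij.symm, hγ] at hj
  · have hi := congrFun h i
    simp [hki.symm, hij, hγ.symm] at hi

theorem stmt19_general (m : ℕ) (x y : Fin m → ℚ) (hy : y ≠ 0)
    (h : (∑ i, C (y i) * X i ^ 2) +
        (∑ i, C (x i) * X i) * (∑ i, C (y i) * X i) =
      (0 : MvPolynomial (Fin m) ℚ)) :
    (Xor'
      (∃ (i : Fin m) (β : ℚ), β ≠ 0 ∧ y = β • (Pi.single i 1 : Fin m → ℚ) ∧
        x = -(Pi.single i 1 : Fin m → ℚ))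
      (∃ (i j : Fin m) (β : ℚ), i ≠ j ∧ β ≠ 0 ∧
        y = β • ((Pi.single i 1 : Fin m → ℚ) - Pi.single j 1) ∧
        x = -((Pi.single i 1 : Fin m → ℚ) + Pi.single j 1))) ∧
    (∑ i, x i = -2 →
      ∃ (i j : Fin m) (β : ℚ), i ≠ j ∧ β ≠ 0 ∧
        y = β • ((Pi.single i 1 : Fin m → ℚ) - Pi.single j 1) ∧
        x = -((Pi.single i 1 : Fin m → ℚ) + Pi.single j 1)) := by
  have H := QuadraticRelations.of_eq_zero h
  have hxor := (xor_iff_or_and_not_and _ _).mpr ⟨H.single_or_pair hy,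
    fun ⟨⟨_, β, _, hy₁, _⟩, ⟨_, _, _, hij, hγ, hy₂, _⟩⟩ =>
      smul_single_ne_smul_sub_single hij β hγ (hy₁.symm.trans hy₂)⟩
  refine ⟨hxor, fun hsum => hxor.or.resolve_left ?_⟩
  rintro ⟨i, β, -, -, rfl⟩
  norm_num at hsum

theorem stmt19 (m : ℕ) (hm : 1 ≤ m) (x y : Fin m → ℚ) (hy : y ≠ 0)
    (h : (∑ i, C (y i) * X i ^ 2) +
        (∑ i, C (x i) * X i) * (∑ i, C (y i) * X i) =
      (0 : MvPolynomial (Fin m) ℚ)) :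
    (Xor'
      (∃ (i : Fin m) (β : ℚ), β ≠ 0 ∧ y = β • (Pi.single i 1 : Fin m → ℚ) ∧
        x = -(Pi.single i 1 : Fin m → ℚ))
      (∃ (i j : Fin m) (β : ℚ), i ≠ j ∧ β ≠ 0 ∧
        y = β • ((Pi.single i 1 : Fin m → ℚ) - Pi.single j 1) ∧
        x = -((Pi.single i 1 : Fin m → ℚ) + Pi.single j 1))) ∧
    (∑ i, x i = -2 →
      ∃ (i j : Fin m) (β : ℚ), i ≠ j ∧ β ≠ 0 ∧
        y = β • ((Pi.single i 1 : Fin m → ℚ) - Pi.single j 1) ∧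
        x = -((Pi.single i 1 : Fin m → ℚ) + Pi.single j 1)) :=
  stmt19_general m x y hy h
end
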